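/- Let l: g × ℝ → ℝ be smooth with ξ ↦ δl/δξ(ξ,z) a diffeomorphism of g onto g* for each z, and define h(μ,z) = ⟨μ, ξ⟩ - l(ξ,z) where μ = δl/δξ(ξ,z). If (ξ(t), z(t)) solves the Euler-Poincaré-Herglotz equations d/dt(δl/δξ) = ad*_ξ(δl/δξ) + (δl/δξ)(∂l/∂z) and z' = l(ξ,z), then μ(t) = δl/δξ(ξ(t),z(t)) satisfies μ' = ad*_{δh/δμ} μ - μ ∂h/∂z and z' = ⟨μ, δh/δμ⟩ - h(μ,z). -/

import Mathlib

/- `g` is a finite-dimensional real Lie algebra: a finite-dimensional real vector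
space together with a bilinear bracket `B` which is alternating and satisfies the
Jacobi identity (these two conditions appear as hypotheses of the theorems below).
Its dual g* is realized as the continuous dual g →L[ℝ] ℝ. -/
variable {g : Type*} [NormedAddCommGroup g] [NormedSpace ℝ g] [FiniteDimensional ℝ g]

/-- The functional derivative δf/δμ ∈ g of f : g* × ℝ → ℝ with respect to μ ∈ g*,
characterized by Df(μ,z)·(ν,0) = ⟨ν, δf/δμ⟩ for all ν ∈ g*.  (Since g is finite
dimensional, the evaluation pairing identifies g with the dual of g*.) -/
noncomputable def deltaMu (f : (g →L[ℝ] ℝ) × ℝ → ℝ) (p : (g →L[ℝ] ℝ) × ℝ) : g :=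
  (Module.evalEquiv ℝ g).symm <|
    (((fderiv ℝ f p).comp (ContinuousLinearMap.inl ℝ (g →L[ℝ] ℝ) ℝ)).toLinearMap).comp
      ((LinearMap.toContinuousLinearMap :
        (g →ₗ[ℝ] ℝ) ≃ₗ[ℝ] (g →L[ℝ] ℝ)).toLinearMap)

/-- The partial derivative ∂f/∂z of f : g* × ℝ → ℝ in the ℝ-variable. -/
noncomputable def deltaZ (f : (g →L[ℝ] ℝ) × ℝ → ℝ) (p : (g →L[ℝ] ℝ) × ℝ) : ℝ :=
  fderiv ℝ f p (0, 1)

/-- The Lie-Poisson-Jacobi bracket on g* × ℝ (B is the Lie bracket of g):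
{f,k}(μ,z) = ⟨μ,[δf/δμ, δk/δμ]⟩ + ⟨μ,δf/δμ⟩ ∂k/∂z - ⟨μ,δk/δμ⟩ ∂f/∂z
             - f ∂k/∂z + k ∂f/∂z. -/
noncomputable def LPJBracket (B : g →ₗ[ℝ] g →ₗ[ℝ] g)
    (f k : (g →L[ℝ] ℝ) × ℝ → ℝ) (p : (g →L[ℝ] ℝ) × ℝ) : ℝ :=
  p.1 (B (deltaMu f p) (deltaMu k p)) + p.1 (deltaMu f p) * deltaZ k p
    - p.1 (deltaMu k p) * deltaZ f p - f p * deltaZ k p + k p * deltaZ f p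

/-- The coadjoint operator ad*_ξ : g* → g*, ⟨ad*_ξ μ, η⟩ = ⟨μ, [ξ, η]⟩,
where B is the Lie bracket of g. -/
noncomputable def coad (B : g →ₗ[ℝ] g →ₗ[ℝ] g) (ξ : g) (μ : g →L[ℝ] ℝ) :
    g →L[ℝ] ℝ :=
  μ.comp (LinearMap.toContinuousLinearMap (B ξ))

/-- The functional derivative δl/δξ ∈ g* of l : g × ℝ → ℝ in the g-variable. -/
noncomputable def deltaXi (l : g × ℝ → ℝ) (p : g × ℝ) : g →L[ℝ] ℝ :=
  (fderiv ℝ l p).comp (ContinuousLinearMap.inl ℝ g ℝ)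

/-- The partial derivative ∂l/∂z of l : g × ℝ → ℝ in the ℝ-variable. -/
noncomputable def deltaZl (l : g × ℝ → ℝ) (p : g × ℝ) : ℝ :=
  fderiv ℝ l p (0, 1)

set_option linter.unusedSectionVars false

section AuxEPH

lemma deltaMu_char (f : (g →L[ℝ] ℝ) × ℝ → ℝ) (q : (g →L[ℝ] ℝ) × ℝ) (ν : g →L[ℝ] ℝ) :
    ν (deltaMu f q) = fderiv ℝ f q (ν, 0) := by
  have h1 : ν (deltaMu f q) = ν.toLinearMap (deltaMu f q) := rfl
  have h2 : (LinearMap.toContinuousLinearMap (ν.toLinearMap) : g →L[ℝ] ℝ) = ν :=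
    ContinuousLinearMap.ext fun x => rfl
  rw [h1, deltaMu, Module.apply_evalEquiv_symm_apply]
  simp only [LinearMap.coe_comp, Function.comp_apply, LinearEquiv.coe_coe,
    ContinuousLinearMap.coe_comp', ContinuousLinearMap.coe_coe, h2]
  rfl

lemma fderiv_char (f : (g →L[ℝ] ℝ) × ℝ → ℝ) (q : (g →L[ℝ] ℝ) × ℝ) (ν : g →L[ℝ] ℝ) (a : ℝ) :
    fderiv ℝ f q (ν, a) = ν (deltaMu f q) + a * deltaZ f q := by
  have : (ν, a) = (ν, 0) + a • ((0 : g →L[ℝ] ℝ), (1:ℝ)) := by simp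
  rw [this, map_add, map_smul, deltaMu_char, deltaZ]
  simp [smul_eq_mul]


/-- the continuous linear map T ↦ T ∘ inl -/
noncomputable def Phi (g : Type*) [NormedAddCommGroup g] [NormedSpace ℝ g] :
    ((g × ℝ) →L[ℝ] ℝ) →L[ℝ] (g →L[ℝ] ℝ) :=
  (ContinuousLinearMap.compL ℝ g (g × ℝ) ℝ).flip (ContinuousLinearMap.inl ℝ g ℝ)

lemma deltaXi_eq (l : g × ℝ → ℝ) : deltaXi l = fun p => Phi g (fderiv ℝ l p) := rfl

lemma contDiff_deltaXi {l : g × ℝ → ℝ} (hl : ContDiff ℝ (⊤ : ℕ∞) l) :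
    ContDiff ℝ (⊤ : ℕ∞) (deltaXi l) := by
  rw [deltaXi_eq]
  exact (Phi g).contDiff.comp (hl.fderiv_right (by simp))

lemma hasFDerivAt_deltaXi {l : g × ℝ → ℝ} (hl : ContDiff ℝ (⊤ : ℕ∞) l) (p : g × ℝ) :
    HasFDerivAt (deltaXi l) ((Phi g).comp (fderiv ℝ (fderiv ℝ l) p)) p := by
  rw [deltaXi_eq]
  exact ((Phi g).hasFDerivAt).comp p
    (((hl.fderiv_right (m := 1) (by exact WithTop.coe_le_coe.2 le_top)).differentiable one_ne_zero) p).hasFDerivAt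

lemma symm_deltaXi {l : g × ℝ → ℝ} (hl : ContDiff ℝ (⊤ : ℕ∞) l) (p : g × ℝ) (η x : g) :
    fderiv ℝ (deltaXi l) p (η, 0) x = fderiv ℝ (deltaXi l) p (x, 0) η := by
  rw [(hasFDerivAt_deltaXi hl p).fderiv]
  have hs : IsSymmSndFDerivAt ℝ l p := hl.contDiffAt.isSymmSndFDerivAt (by rw [minSmoothness_of_isRCLikeNormedField]; exact WithTop.coe_le_coe.2 le_top)
  exact hs (η, 0) (x, 0)

/-- the linear map sending T : (g* × ℝ) →L ℝ to the corresponding element of g -/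
noncomputable def Lmap (g : Type*) [NormedAddCommGroup g] [NormedSpace ℝ g]
    [FiniteDimensional ℝ g] :
    (((g →L[ℝ] ℝ) × ℝ) →L[ℝ] ℝ) →ₗ[ℝ] g where
  toFun T := (Module.evalEquiv ℝ g).symm <|
    ((T.comp (ContinuousLinearMap.inl ℝ (g →L[ℝ] ℝ) ℝ)).toLinearMap).comp
      ((LinearMap.toContinuousLinearMap :
        (g →ₗ[ℝ] ℝ) ≃ₗ[ℝ] (g →L[ℝ] ℝ)).toLinearMap)
  map_add' T T' := by
    rw [← map_add]
    exact congrArg _ (LinearMap.ext fun φ => rfl)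
  map_smul' c T := by
    rw [← map_smul]
    exact congrArg _ (LinearMap.ext fun φ => rfl)

lemma deltaMu_eq_Lmap (f : (g →L[ℝ] ℝ) × ℝ → ℝ) :
    deltaMu f = fun p => Lmap g (fderiv ℝ f p) := rfl

lemma contDiff_deltaMu {h : (g →L[ℝ] ℝ) × ℝ → ℝ} (hh : ContDiff ℝ (⊤ : ℕ∞) h) :
    ContDiff ℝ (⊤ : ℕ∞) (deltaMu h) := by
  rw [deltaMu_eq_Lmap]
  exact (LinearMap.toContinuousLinearMap (Lmap g)).contDiff.comp (hh.fderiv_right (m := ((⊤ : ℕ∞) : WithTop ℕ∞)) (by simp))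

lemma fderiv_l_char {l : g × ℝ → ℝ} (p : g × ℝ) (η : g) (a : ℝ) :
    fderiv ℝ l p (η, a) = deltaXi l p η + a * deltaZl l p := by
  have : (η, a) = ((η, 0) : g × ℝ) + a • ((0 : g), (1:ℝ)) := by simp
  rw [this, map_add, map_smul]
  simp only [deltaXi, deltaZl, ContinuousLinearMap.coe_comp', Function.comp_apply,
    ContinuousLinearMap.inl_apply, smul_eq_mul]

section key
variable {l : g × ℝ → ℝ} {h : (g →L[ℝ] ℝ) × ℝ → ℝ}
  (hl : ContDiff ℝ (⊤ : ℕ∞) l) (hh : ContDiff ℝ (⊤ : ℕ∞) h)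
  (hLeg : ∀ (ξ : g) (z : ℝ), h (deltaXi l (ξ, z), z) = deltaXi l (ξ, z) ξ - l (ξ, z))

include hl hh hLeg in
lemma key1 (p : g × ℝ) (η : g) (a : ℝ) :
    fderiv ℝ h (deltaXi l p, p.2) (fderiv ℝ (deltaXi l) p (η, a), a)
      = (fderiv ℝ (deltaXi l) p (η, a)) p.1 - a * deltaZl l p := by
  set F' := fderiv ℝ (deltaXi l) p with hF'
  have hFd : HasFDerivAt (deltaXi l) F' p :=
    ((contDiff_deltaXi hl).differentiable (by simp) p).hasFDerivAt
  -- the map G q = (deltaXi l q, q.2)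
  have hG : HasFDerivAt (fun q : g × ℝ => (deltaXi l q, q.2))
      (F'.prod (ContinuousLinearMap.snd ℝ g ℝ)) p :=
    hFd.prodMk (hasFDerivAt_snd)
  have hu : HasFDerivAt (fun q : g × ℝ => h (deltaXi l q, q.2))
      ((fderiv ℝ h (deltaXi l p, p.2)).comp (F'.prod (ContinuousLinearMap.snd ℝ g ℝ))) p :=
    ((hh.differentiable (by simp)) _).hasFDerivAt.comp p hG
  -- the evaluation map q ↦ (deltaXi l q) q.1
  have heval : HasFDerivAt (fun q : g × ℝ => (deltaXi l q) q.1)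
      (((isBoundedBilinearMap_apply (𝕜 := ℝ) (E := g) (F := ℝ)).deriv
        (deltaXi l p, p.1)).comp (F'.prod (ContinuousLinearMap.fst ℝ g ℝ))) p := by
    exact ((isBoundedBilinearMap_apply).hasFDerivAt (deltaXi l p, p.1)).comp p
      (hFd.prodMk hasFDerivAt_fst)
  have hw : HasFDerivAt (fun q : g × ℝ => (deltaXi l q) q.1 - l q)
      ((((isBoundedBilinearMap_apply (𝕜 := ℝ) (E := g) (F := ℝ)).deriv
        (deltaXi l p, p.1)).comp (F'.prod (ContinuousLinearMap.fst ℝ g ℝ)))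
        - fderiv ℝ l p) p :=
    heval.sub ((hl.differentiable (by simp)) p).hasFDerivAt
  have hfuneq : (fun q : g × ℝ => h (deltaXi l q, q.2))
      = fun q : g × ℝ => (deltaXi l q) q.1 - l q := by
    funext q
    exact hLeg q.1 q.2
  rw [hfuneq] at hu
  have := hu.unique hw
  have happ := congrFun (congrArg (fun (T : (g × ℝ) →L[ℝ] ℝ) => ⇑T) this) (η, a)
  simp only [ContinuousLinearMap.coe_comp', Function.comp_apply,
    ContinuousLinearMap.prod_apply, ContinuousLinearMap.coe_sub',
    Pi.sub_apply, ContinuousLinearMap.coe_fst', ContinuousLinearMap.coe_snd',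
    IsBoundedBilinearMap.deriv_apply] at happ
  rw [happ, fderiv_l_char]
  ring

end key

section main
variable {l : g × ℝ → ℝ} {h : (g →L[ℝ] ℝ) × ℝ → ℝ}
  (hl : ContDiff ℝ (⊤ : ℕ∞) l) (hh : ContDiff ℝ (⊤ : ℕ∞) h)
  (hLeg : ∀ (ξ : g) (z : ℝ), h (deltaXi l (ξ, z), z) = deltaXi l (ξ, z) ξ - l (ξ, z))
  (hdiffeo : ∀ z : ℝ, Function.Bijective (fun ξ : g => deltaXi l (ξ, z)))

include hl hh hLeg in
lemma kernelE (q : g × ℝ) :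
    fderiv ℝ (deltaXi l) q (deltaMu h (deltaXi l q, q.2) - q.1, 0) = 0 := by
  have h0 : ∀ η : g, fderiv ℝ (deltaXi l) q (η, 0) (deltaMu h (deltaXi l q, q.2) - q.1) = 0 := by
    intro η
    have k := key1 hl hh hLeg q η 0
    rw [fderiv_char] at k
    simp only [mul_zero, add_zero, zero_mul, sub_zero] at k
    rw [map_sub, k, sub_self]
  ext η
  rw [ContinuousLinearMap.zero_apply, symm_deltaXi hl, h0 η]

include hl hh in
lemma hasFDerivAt_E (q : g × ℝ) :
    HasFDerivAt (fun q : g × ℝ => deltaMu h (deltaXi l q, q.2) - q.1)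
      ((fderiv ℝ (deltaMu h) (deltaXi l q, q.2)).comp
        ((fderiv ℝ (deltaXi l) q).prod (ContinuousLinearMap.snd ℝ g ℝ))
        - ContinuousLinearMap.fst ℝ g ℝ) q := by
  have hFd : HasFDerivAt (deltaXi l) (fderiv ℝ (deltaXi l) q) q :=
    ((contDiff_deltaXi hl).differentiable (by simp) q).hasFDerivAt
  have hG : HasFDerivAt (fun q : g × ℝ => (deltaXi l q, q.2))
      ((fderiv ℝ (deltaXi l) q).prod (ContinuousLinearMap.snd ℝ g ℝ)) q :=
    hFd.prodMk hasFDerivAt_snd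
  exact ((((contDiff_deltaMu hh).differentiable (by simp)) _).hasFDerivAt.comp q hG).sub
    hasFDerivAt_fst

include hl hh hLeg in
lemma Ederiv_self (q : g × ℝ) :
    fderiv ℝ (fun q : g × ℝ => deltaMu h (deltaXi l q, q.2) - q.1) q
      (deltaMu h (deltaXi l q, q.2) - q.1, 0)
      = -(deltaMu h (deltaXi l q, q.2) - q.1) := by
  rw [(hasFDerivAt_E hl hh q).fderiv]
  simp only [ContinuousLinearMap.coe_sub', Pi.sub_apply,
    ContinuousLinearMap.coe_comp', Function.comp_apply,
    ContinuousLinearMap.prod_apply, ContinuousLinearMap.coe_fst',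
    ContinuousLinearMap.coe_snd']
  rw [kernelE hl hh hLeg q]
  have : ((0 : g →L[ℝ] ℝ), (0 : ℝ)) = (0 : (g →L[ℝ] ℝ) × ℝ) := rfl
  rw [this, map_zero, zero_sub]

include hl hh in
lemma contDiff_E :
    ContDiff ℝ (⊤ : ℕ∞) (fun q : g × ℝ => deltaMu h (deltaXi l q, q.2) - q.1) :=
  ((contDiff_deltaMu hh).comp (ContDiff.prodMk (contDiff_deltaXi hl) contDiff_snd)).sub contDiff_fst

end main

open Set in
/-- Abstract form of the key rigidity argument: if `E` lies in the kernel of `DF`,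
`DE·E = -E`, and `F(·,z)` is injective, then `E = 0`. -/
lemma E_eq_zero (E : g × ℝ → g) (F : g × ℝ → (g →L[ℝ] ℝ))
    (hEdiff : ∀ q, HasFDerivAt E (fderiv ℝ E q) q)
    (hEcont : Continuous (fun q => fderiv ℝ E q))
    (hFdiff : ∀ q, HasFDerivAt F (fderiv ℝ F q) q)
    (hker : ∀ q, fderiv ℝ F q (E q, 0) = 0)
    (hself : ∀ q, fderiv ℝ E q (E q, 0) = -E q)
    (hinj : ∀ z : ℝ, Function.Injective fun ξ : g => F (ξ, z))
    (q : g × ℝ) : E q = 0 := by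
  by_contra hvne
  set v : g := E q with hvdef
  set γ : ℝ → g × ℝ := fun s => (q.1 + s • v, q.2) with hγdef
  have hγq : γ 0 = q := by simp [hγdef]
  have hγ : ∀ s : ℝ, HasDerivAt γ (v, (0 : ℝ)) s := by
    intro s
    have h1 : HasDerivAt (fun s : ℝ => q.1 + s • v) v s := by
      simpa using (((hasDerivAt_id s).smul_const v).const_add q.1)
    exact HasDerivAt.prodMk h1 (hasDerivAt_const s q.2)
  have hγcont : Continuous γ := by
    exact continuous_iff_continuousAt.2 fun s => (hγ s).continuousAt
  set gc : ℝ → g := fun s => E (γ s) - (1 - s) • v with hgcdef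
  have hgc0 : gc 0 = 0 := by simp [hgcdef, hγq, hvdef]
  have hgc' : ∀ s : ℝ, HasDerivAt gc (fderiv ℝ E (γ s) (v, 0) + v) s := by
    intro s
    have h1 : HasDerivAt (fun s => E (γ s)) (fderiv ℝ E (γ s) (v, 0)) s := by
      exact (hEdiff (γ s)).comp_hasDerivAt s (hγ s)
    have h2 : HasDerivAt (fun s : ℝ => (1 - s) • v) (-v) s := by
      simpa using (((hasDerivAt_const s (1:ℝ)).sub (hasDerivAt_id s)).smul_const v)
    have h3 := h1.sub h2
    rw [sub_neg_eq_add] at h3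
    exact h3
  -- the key pointwise identity on [0, 1/2]
  have hkey : ∀ s ∈ Icc (0:ℝ) (1/2),
      fderiv ℝ E (γ s) (v, 0) + v
        = -((1 - s)⁻¹ • (gc s + fderiv ℝ E (γ s) (gc s, 0))) := by
    intro s hs
    have hts : (1:ℝ) - s ≠ 0 := by nlinarith [hs.1, hs.2]
    have hEsub : (1 - s) • v = E (γ s) - gc s := by simp [hgcdef]
    apply smul_right_injective g hts
    show (1 - s) • (fderiv ℝ E (γ s) (v, 0) + v)
      = (1 - s) • -((1 - s)⁻¹ • (gc s + fderiv ℝ E (γ s) (gc s, 0)))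
    have e1 : (1 - s) • (fderiv ℝ E (γ s) (v, 0) + v)
        = fderiv ℝ E (γ s) ((1 - s) • v, 0) + (1 - s) • v := by
      rw [smul_add, ← map_smul]
      congr 2
      rw [Prod.smul_mk, smul_zero]
    rw [e1, hEsub]
    have e2 : ((E (γ s) - gc s, 0) : g × ℝ) = (E (γ s), 0) - (gc s, 0) := by
      rw [Prod.mk_sub_mk, sub_zero]
    rw [e2, map_sub, hself (γ s), smul_neg, smul_smul, mul_inv_cancel₀ hts, one_smul]
    abel
  -- bound the operator norms along the curve
  obtain ⟨K, hK⟩ := isCompact_Icc.exists_bound_of_continuousOn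
    ((hEcont.comp hγcont).continuousOn (s := Icc (0:ℝ) (1/2)))
  set C : ℝ := 2 * (1 + max K 0) with hCdef
  have hgcnorm : ∀ s ∈ Ico (0:ℝ) (1/2),
      ‖fderiv ℝ E (γ s) (v, 0) + v‖ ≤ C * ‖gc s‖ + 0 := by
    intro s hs
    have hs' : s ∈ Icc (0:ℝ) (1/2) := ⟨hs.1, le_of_lt hs.2⟩
    have hts : (0:ℝ) < 1 - s := by nlinarith [hs.2]
    rw [hkey s hs', norm_neg, norm_smul, norm_inv, Real.norm_eq_abs,
      abs_of_pos hts, add_zero]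
    have hb1 : (1 - s)⁻¹ ≤ 2 := by
      rw [inv_le_comm₀ hts (by norm_num)]
      nlinarith [hs.2]
    have hb2 : ‖gc s + fderiv ℝ E (γ s) (gc s, 0)‖ ≤ (1 + max K 0) * ‖gc s‖ := by
      refine (norm_add_le _ _).trans ?_
      have h3 : ‖fderiv ℝ E (γ s) (gc s, 0)‖ ≤ max K 0 * ‖gc s‖ := by
        refine (ContinuousLinearMap.le_opNorm _ _).trans ?_
        have h4 : ‖((gc s, 0) : g × ℝ)‖ = ‖gc s‖ := by
          rw [Prod.norm_def]
          simp
        rw [h4]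
        exact mul_le_mul_of_nonneg_right ((hK s hs').trans (le_max_left _ _)) (norm_nonneg _)
      nlinarith [norm_nonneg (gc s)]
    calc (1 - s)⁻¹ * ‖gc s + fderiv ℝ E (γ s) (gc s, 0)‖
        ≤ 2 * ((1 + max K 0) * ‖gc s‖) := by
          apply mul_le_mul hb1 hb2 (norm_nonneg _) (by norm_num)
      _ = C * ‖gc s‖ := by rw [hCdef]; ring
  -- Gronwall: gc vanishes on [0, 1/2]
  have hgczero : ∀ s ∈ Icc (0:ℝ) (1/2), gc s = 0 := by
    have hgron := norm_le_gronwallBound_of_norm_deriv_right_le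
      (f := gc) (f' := fun s => fderiv ℝ E (γ s) (v, 0) + v) (δ := 0) (K := C) (ε := 0)
      (a := 0) (b := 1/2)
      (fun s _ => (hgc' s).continuousAt.continuousWithinAt)
      (fun s _ => (hgc' s).hasDerivWithinAt)
      (by rw [hgc0, norm_zero]) hgcnorm
    intro s hs
    have := hgron s hs
    rw [gronwallBound_ε0_δ0] at this
    exact norm_le_zero_iff.1 this
  have hEγ : ∀ s ∈ Icc (0:ℝ) (1/2), E (γ s) = (1 - s) • v := by
    intro s hs
    have := hgczero s hs
    rw [hgcdef] at this
    exact sub_eq_zero.1 this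
  -- F is constant along the curve
  have hFconst : F (γ (1/2)) = F (γ 0) := by
    apply constant_of_has_deriv_right_zero (f := fun s => F (γ s)) (a := 0) (b := 1/2)
      (fun s _ => ((hFdiff (γ s)).continuousAt.comp (hγ s).continuousAt).continuousWithinAt)
      _ (1/2) (by norm_num)
    intro s hs
    have hs' : s ∈ Icc (0:ℝ) (1/2) := ⟨hs.1, le_of_lt hs.2⟩
    have hts : (1:ℝ) - s ≠ 0 := by nlinarith [hs.1, hs.2]
    have hF1 : HasDerivAt (fun s => F (γ s)) (fderiv ℝ F (γ s) (v, 0)) s := by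
      exact (hFdiff (γ s)).comp_hasDerivAt s (hγ s)
    have hzero : fderiv ℝ F (γ s) (v, 0) = 0 := by
      have hvv : ((v, 0) : g × ℝ) = (1 - s)⁻¹ • ((E (γ s), 0) : g × ℝ) := by
        rw [hEγ s hs', Prod.smul_mk, smul_smul, inv_mul_cancel₀ hts, one_smul, smul_zero]
      rw [hvv, map_smul, hker (γ s), smul_zero]
    rw [← hzero]
    exact hF1.hasDerivWithinAt
  have : q.1 + (1/2 : ℝ) • v = q.1 := by
    have h0 : γ 0 = (q.1, q.2) := by simp [hγdef]
    have h12 : γ (1/2 : ℝ) = (q.1 + (1/2 : ℝ) • v, q.2) := rfl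
    have := hFconst
    rw [h0, h12] at this
    exact hinj q.2 this
  have h2 : (1/2 : ℝ) • v = 0 := by
    have h3 := this
    rwa [add_eq_left] at h3
  rcases smul_eq_zero.1 h2 with h4 | h4
  · norm_num at h4
  · exact hvne h4

section conseq
variable {l : g × ℝ → ℝ} {h : (g →L[ℝ] ℝ) × ℝ → ℝ}
  (hl : ContDiff ℝ (⊤ : ℕ∞) l) (hh : ContDiff ℝ (⊤ : ℕ∞) h)
  (hLeg : ∀ (ξ : g) (z : ℝ), h (deltaXi l (ξ, z), z) = deltaXi l (ξ, z) ξ - l (ξ, z))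
  (hdiffeo : ∀ z : ℝ, Function.Bijective (fun ξ : g => deltaXi l (ξ, z)))

include hl hh hLeg hdiffeo in
lemma deltaMu_deltaXi (q : g × ℝ) : deltaMu h (deltaXi l q, q.2) = q.1 := by
  have := E_eq_zero (fun q : g × ℝ => deltaMu h (deltaXi l q, q.2) - q.1) (deltaXi l)
    (fun q => (hasFDerivAt_E hl hh q).differentiableAt.hasFDerivAt)
    ((contDiff_E hl hh).continuous_fderiv (by simp))
    (fun q => ((contDiff_deltaXi hl).differentiable (by simp) q).hasFDerivAt)
    (kernelE hl hh hLeg)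
    (Ederiv_self hl hh hLeg)
    (fun z => (hdiffeo z).injective)
    q
  exact sub_eq_zero.1 this

include hl hh hLeg hdiffeo in
lemma deltaZ_deltaXi (q : g × ℝ) :
    deltaZ h (deltaXi l q, q.2) = - deltaZl l q := by
  have k := key1 hl hh hLeg q 0 1
  rw [fderiv_char, deltaMu_deltaXi hl hh hLeg hdiffeo q, one_mul, one_mul] at k
  linarith [k]

end conseq

end AuxEPH

/-- Legendre transform of the Euler-Poincaré-Herglotz equations: if ξ ↦ δl/δξ(ξ,z)
is a diffeomorphism of g onto g* for each z, h(μ,z) = ⟨μ,ξ⟩ - l(ξ,z) with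
μ = δl/δξ(ξ,z), and (ξ(t), z(t)) solves
d/dt(δl/δξ) = ad*_ξ(δl/δξ) + (δl/δξ)(∂l/∂z),  z' = l(ξ,z),
then μ(t) = δl/δξ(ξ(t),z(t)) satisfies the Lie-Poisson-Jacobi equations
μ' = ad*_{δh/δμ} μ - μ ∂h/∂z,  z' = ⟨μ, δh/δμ⟩ - h(μ,z).  (B denotes the Lie
bracket of g.) -/
theorem EPH_implies_LPJ
    (B : g →ₗ[ℝ] g →ₗ[ℝ] g) (hBalt : ∀ x : g, B x x = 0)
    (hBjac : ∀ x y z : g, B x (B y z) + B y (B z x) + B z (B x y) = 0)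
    (l : g × ℝ → ℝ) (h : (g →L[ℝ] ℝ) × ℝ → ℝ)
    (hl : ContDiff ℝ (⊤ : ℕ∞) l) (hh : ContDiff ℝ (⊤ : ℕ∞) h)
    (hdiffeo : ∀ z : ℝ, Function.Bijective (fun ξ : g => deltaXi l (ξ, z)))
    (hLeg : ∀ (ξ : g) (z : ℝ), h (deltaXi l (ξ, z), z) = deltaXi l (ξ, z) ξ - l (ξ, z))
    (ξ : ℝ → g) (z : ℝ → ℝ)
    (hEPH : ∀ t, HasDerivAt (fun s => deltaXi l (ξ s, z s))
      (coad B (ξ t) (deltaXi l (ξ t, z t))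
        + deltaZl l (ξ t, z t) • deltaXi l (ξ t, z t)) t)
    (hzeq : ∀ t, HasDerivAt z (l (ξ t, z t)) t) :
    (∀ t, HasDerivAt (fun s => deltaXi l (ξ s, z s))
      (coad B (deltaMu h (deltaXi l (ξ t, z t), z t)) (deltaXi l (ξ t, z t))
        - deltaZ h (deltaXi l (ξ t, z t), z t) • deltaXi l (ξ t, z t)) t) ∧
    (∀ t, HasDerivAt z
      ((deltaXi l (ξ t, z t)) (deltaMu h (deltaXi l (ξ t, z t), z t))
        - h (deltaXi l (ξ t, z t), z t)) t) := by
  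
  have e1 : ∀ t : ℝ, deltaMu h (deltaXi l (ξ t, z t), z t) = ξ t :=
    fun t => deltaMu_deltaXi hl hh hLeg hdiffeo (ξ t, z t)
  have e2 : ∀ t : ℝ, deltaZ h (deltaXi l (ξ t, z t), z t) = - deltaZl l (ξ t, z t) :=
    fun t => deltaZ_deltaXi hl hh hLeg hdiffeo (ξ t, z t)
  constructor
  · intro t
    rw [e1 t, e2 t]
    convert hEPH t using 1
    ext x
    simp
  · intro t
    rw [e1 t, hLeg (ξ t) (z t)]
    simpa using hzeq t
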